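/- arXiv:1203.6344 — 3 statements merged into one kernel-verified Lean document; each statement's English description precedes it below -/
import Mathlib

section
/- The number of lower k-run overpartitions of n equals the number of upper k-run overpartitions of n, for all n ≥ 0 and k ≥ 1. -/
open scoped BigOperators
open Real

/-- An overpartition: a multiset of (non-overlined) positive parts together with a
finite set of overlined part sizes (the last occurrence of a part size may be overlined). -/
structure Overpartition where
  parts : Multiset ℕ
  overParts : Finset ℕ
  parts_pos : ∀ p ∈ parts, 0 < p
  over_pos : ∀ p ∈ overParts, 0 < p

/-- The size (sum of all parts) of an overpartition. -/
def Overpartition.size (μ : Overpartition) : ℕ := μ.parts.sum + ∑ p ∈ μ.overParts, p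

/-- The number of parts of an overpartition. -/
def Overpartition.numParts (μ : Overpartition) : ℕ := Multiset.card μ.parts + μ.overParts.card

/-- Lower `k`-run condition: every overlined part lies in a run of exactly `k` consecutive
overlined parts `j+1, …, j+k`, with no part of size `j` (overlined or not) and no overlined
part of size `j+k+1`. -/
def IsLowerKRun (k : ℕ) (μ : Overpartition) : Prop :=
  ∀ m ∈ μ.overParts, ∃ j : ℕ, j + 1 ≤ m ∧ m ≤ j + k ∧
    (∀ i : ℕ, j + 1 ≤ i → i ≤ j + k → i ∈ μ.overParts) ∧
    j ∉ μ.parts ∧ j ∉ μ.overParts ∧ j + k + 1 ∉ μ.overParts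

/-- Upper `k`-run condition: every overlined part lies in a run of overlined parts
`j+1, …, j+k`, with no overlined part of size `j` and no part of any kind of size `j+k+1`. -/
def IsUpperKRun (k : ℕ) (μ : Overpartition) : Prop :=
  ∀ m ∈ μ.overParts, ∃ j : ℕ, j + 1 ≤ m ∧ m ≤ j + k ∧
    (∀ i : ℕ, j + 1 ≤ i → i ≤ j + k → i ∈ μ.overParts) ∧
    j ∉ μ.overParts ∧ j + k + 1 ∉ μ.parts ∧ j + k + 1 ∉ μ.overParts

/-- `p̄ₖ(n)`, the number of lower `k`-run overpartitions of `n`. -/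
noncomputable def lowerKRunCount (k n : ℕ) : ℕ :=
  Nat.card {μ : Overpartition // μ.size = n ∧ IsLowerKRun k μ}

/-- The number of upper `k`-run overpartitions of `n`. -/
noncomputable def upperKRunCount (k n : ℕ) : ℕ :=
  Nat.card {μ : Overpartition // μ.size = n ∧ IsUpperKRun k μ}

/-- `p̄ₖ(ℓ,n)`, the number of upper `k`-run overpartitions of `n` with exactly `ℓ` parts. -/
noncomputable def upperKRunCount2 (k l n : ℕ) : ℕ :=
  Nat.card {μ : Overpartition // μ.size = n ∧ μ.numParts = l ∧ IsUpperKRun k μ}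

/-- The one-variable generating function `Ḡₖ(q)` of lower `k`-run overpartitions. -/
noncomputable def Gbar (k : ℕ) (q : ℂ) : ℂ := ∑' n : ℕ, (lowerKRunCount k n : ℂ) * q ^ n

/-- The two-variable generating function `Ḡₖ(x;q)` of `k`-run overpartitions. -/
noncomputable def Gbar2 (k : ℕ) (x q : ℂ) : ℂ :=
  ∑' p : ℕ × ℕ, (upperKRunCount2 k p.1 p.2 : ℂ) * x ^ p.1 * q ^ p.2

/-- The finite q-Pochhammer symbol `(a;q)ₙ`. -/
def qPoch (a q : ℂ) (n : ℕ) : ℂ := ∏ j ∈ Finset.range n, (1 - a * q ^ j)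

/-- The infinite q-Pochhammer symbol `(a;q)_∞`. -/
noncomputable def qPochInf (a q : ℂ) : ℂ := ∏' j : ℕ, (1 - a * q ^ j)

/-!
Each overlined run `j+1, …, j+k` of a lower `k`-run overpartition is followed by a maximal
block `j+k+1, …, j+k+s` of non-overlined parts. Trading one copy of each part of that block for
the parts `j+1, …, j+s` and moving the run up to `j+s+1, …, j+s+k` loses `ks` on the parts and
gains `ks` on the run; since `j` and `j+k+s+1` are still not parts, the run becomes an upper
`k`-run. Conversely, an upper run slides down past the maximal block of parts just below it.
Every slide stays inside the window `j+1, …, j+k+s`, and the windows of distinct runs are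
separated by a position that is not a part, so all runs slide at once and the two maps are
mutually inverse.
-/

namespace KRun

open Finset

section Blocks

variable {P : Multiset ℕ} {b s t x : ℕ}

lemma exists_add_succ_notMem (P : Multiset ℕ) (b : ℕ) : ∃ s, b + s + 1 ∉ P :=
  ⟨P.sum, fun h => by have := Multiset.le_sum_of_mem h; omega⟩

def blockAbove (P : Multiset ℕ) (b : ℕ) : ℕ := Nat.find (exists_add_succ_notMem P b)

lemma add_blockAbove_add_one_notMem (P : Multiset ℕ) (b : ℕ) : b + blockAbove P b + 1 ∉ P :=
  Nat.find_spec (exists_add_succ_notMem P b)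

lemma add_blockAbove_lt (hbx : b < x) (hx : x ∉ P) : b + blockAbove P b < x := by
  have : blockAbove P b ≤ x - b - 1 :=
    Nat.find_min' _ (by rwa [show b + (x - b - 1) + 1 = x by omega])
  omega

lemma mem_of_mem_Ioc_blockAbove (hx : x ∈ Ioc b (b + blockAbove P b)) : x ∈ P := by
  obtain ⟨h₁, h₂⟩ := mem_Ioc.1 hx
  by_contra hxP
  have := add_blockAbove_lt h₁ hxP
  omega

lemma blockAbove_eq (hmem : ∀ x ∈ Ioc b (b + s), x ∈ P) (hs : b + s + 1 ∉ P) :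
    blockAbove P b = s :=
  (Nat.find_eq_iff _).2
    ⟨hs, fun n hn => not_not.2 (hmem _ (mem_Ioc.2 ⟨by omega, by omega⟩))⟩

def gapBelow (P : Multiset ℕ) (b : ℕ) : ℕ := Nat.findGreatest (· ∉ P) b

lemma gapBelow_le (P : Multiset ℕ) (b : ℕ) : gapBelow P b ≤ b := Nat.findGreatest_le b

lemma gapBelow_notMem (h0 : 0 ∉ P) (b : ℕ) : gapBelow P b ∉ P :=
  Nat.findGreatest_spec (P := (· ∉ P)) (Nat.zero_le b) h0

lemma mem_of_mem_Ioc_gapBelow (hx : x ∈ Ioc (gapBelow P b) b) : x ∈ P :=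
  not_not.1 (Nat.findGreatest_is_greatest (mem_Ioc.1 hx).1 (mem_Ioc.1 hx).2)

lemma le_gapBelow (hxb : x ≤ b) (hx : x ∉ P) : x ≤ gapBelow P b := Nat.le_findGreatest hxb hx

lemma gapBelow_eq (htb : t ≤ b) (ht : t ∉ P) (hmem : ∀ x ∈ Ioc t b, x ∈ P) :
    gapBelow P b = t :=
  Nat.findGreatest_eq_iff.2
    ⟨htb, fun _ => ht, fun n hn hnb => not_not.2 (hmem n (mem_Ioc.2 ⟨hn, hnb⟩))⟩

end Blocks

section Runs

variable {k : ℕ} {O S : Finset ℕ} {Q : ℕ → Prop} {j : ℕ}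

variable (k) in
def runs (S : Finset ℕ) : Finset ℕ := S.biUnion fun j => Ioc j (j + k)

lemma mem_runs {x : ℕ} : x ∈ runs k S ↔ ∃ j ∈ S, x ∈ Ioc j (j + k) := mem_biUnion

def runStarts (O : Finset ℕ) : Finset ℕ := {j ∈ O.image (· - 1) | j ∉ O}

lemma mem_runStarts : j ∈ runStarts O ↔ j ∉ O ∧ j + 1 ∈ O := by
  simp only [runStarts, mem_filter, mem_image]
  constructor
  · rintro ⟨⟨m, hm, rfl⟩, hj⟩
    obtain _ | m := m
    · exact absurd hm hj
    · exact ⟨hj, hm⟩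
  · rintro ⟨hj, hj1⟩
    exact ⟨⟨j + 1, hj1, rfl⟩, hj⟩

variable (k) in
def IsMaximalRun (O : Finset ℕ) (j : ℕ) : Prop :=
  Ioc j (j + k) ⊆ O ∧ j ∉ O ∧ j + k + 1 ∉ O

variable (k) in
def RunsApart (S : Finset ℕ) : Prop := ∀ j ∈ S, ∀ j' ∈ S, j < j' → j + k < j'

variable (k) in
def CoveredByRuns (O : Finset ℕ) (Q : ℕ → Prop) : Prop :=
  ∀ m ∈ O, ∃ j, m ∈ Ioc j (j + k) ∧ IsMaximalRun k O j ∧ Q j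

lemma RunsApart.isMaximalRun (h : RunsApart k S) (hj : j ∈ S) : IsMaximalRun k (runs k S) j := by
  refine ⟨fun x hx => mem_runs.2 ⟨j, hj, hx⟩, fun hmem => ?_, fun hmem => ?_⟩ <;>
  · obtain ⟨j', hj', hx⟩ := mem_runs.1 hmem
    have := mem_Ioc.1 hx
    rcases lt_trichotomy j j' with hlt | rfl | hgt
    · have := h j hj j' hj' hlt; omega
    · omega
    · have := h j' hj' j hj hgt; omega

lemma runStarts_runs (hk : 0 < k) (h : RunsApart k S) : runStarts (runs k S) = S := by
  ext j
  rw [mem_runStarts]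
  refine ⟨fun ⟨hj, hj1⟩ => ?_, fun hj => ⟨(h.isMaximalRun hj).2.1,
    (h.isMaximalRun hj).1 (mem_Ioc.2 ⟨lt_add_one j, by omega⟩)⟩⟩
  obtain ⟨j', hj', hx⟩ := mem_runs.1 hj1
  obtain ⟨h₁, h₂⟩ := mem_Ioc.1 hx
  obtain rfl | hlt : j' = j ∨ j' < j := by omega
  · exact hj'
  · exact absurd (mem_runs.2 ⟨j', hj', mem_Ioc.2 ⟨hlt, by omega⟩⟩) hj

lemma RunsApart.coveredByRuns (h : RunsApart k S) (hQ : ∀ j ∈ S, Q j) :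
    CoveredByRuns k (runs k S) Q := fun m hm => by
  obtain ⟨j, hj, hmj⟩ := mem_runs.1 hm
  exact ⟨j, hmj, h.isMaximalRun hj, hQ j hj⟩

lemma CoveredByRuns.runStarts_spec (h : CoveredByRuns k O Q) (hj : j ∈ runStarts O) :
    IsMaximalRun k O j ∧ Q j := by
  obtain ⟨hjO, hj1⟩ := mem_runStarts.1 hj
  obtain ⟨j', hj1', hrun, hQ⟩ := h _ hj1
  obtain ⟨h₁, h₂⟩ := mem_Ioc.1 hj1'
  obtain rfl | hlt : j' = j ∨ j' < j := by omega
  · exact ⟨hrun, hQ⟩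
  · exact absurd (hrun.1 (mem_Ioc.2 ⟨hlt, by omega⟩)) hjO

lemma CoveredByRuns.eq_runs (h : CoveredByRuns k O Q) : O = runs k (runStarts O) := by
  ext m
  refine ⟨fun hm => ?_, fun hm => ?_⟩
  · obtain ⟨j, hmj, hrun, -⟩ := h m hm
    refine mem_runs.2 ⟨j, mem_runStarts.2 ⟨hrun.2.1, hrun.1 ?_⟩, hmj⟩
    have := mem_Ioc.1 hmj
    exact mem_Ioc.2 ⟨by omega, by omega⟩
  · obtain ⟨j, hj, hmj⟩ := mem_runs.1 hm
    exact (h.runStarts_spec hj).1.1 hmj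

lemma CoveredByRuns.runsApart (h : CoveredByRuns k O Q) : RunsApart k (runStarts O) :=
  fun j hj j' hj' hlt => by
  by_contra hle
  exact (h.runStarts_spec hj').1.2.1 ((h.runStarts_spec hj).1.1 (mem_Ioc.2 ⟨hlt, by omega⟩))

lemma isLowerKRun_iff {μ : Overpartition} :
    IsLowerKRun k μ ↔ CoveredByRuns k μ.overParts (· ∉ μ.parts) := by
  simp only [IsLowerKRun, CoveredByRuns, IsMaximalRun, subset_iff, mem_Ioc]
  refine forall₂_congr fun m hm => exists_congr fun j => ?_
  constructor
  · rintro ⟨h₁, h₂, h₃, h₄, h₅, h₆⟩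
    exact ⟨⟨by omega, h₂⟩, ⟨fun i hi => h₃ i (by omega) hi.2, h₅, h₆⟩, h₄⟩
  · rintro ⟨⟨h₁, h₂⟩, ⟨h₃, h₅, h₆⟩, h₄⟩
    exact ⟨h₁, h₂, fun i hi hi' => h₃ ⟨hi, hi'⟩, h₄, h₅, h₆⟩

lemma isUpperKRun_iff {μ : Overpartition} :
    IsUpperKRun k μ ↔ CoveredByRuns k μ.overParts (fun j => j + k + 1 ∉ μ.parts) := by
  simp only [IsUpperKRun, CoveredByRuns, IsMaximalRun, subset_iff, mem_Ioc]
  refine forall₂_congr fun m hm => exists_congr fun j => ?_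
  constructor
  · rintro ⟨h₁, h₂, h₃, h₄, h₅, h₆⟩
    exact ⟨⟨by omega, h₂⟩, ⟨fun i hi => h₃ i (by omega) hi.2, h₄, h₆⟩, h₅⟩
  · rintro ⟨⟨h₁, h₂⟩, ⟨h₃, h₄, h₆⟩, h₅⟩
    exact ⟨h₁, h₂, fun i hi hi' => h₃ ⟨hi, hi'⟩, h₄, h₅, h₆⟩

end Runs

section Replace

variable {P : Multiset ℕ} {X Y : Finset ℕ} {x : ℕ}

def replaceParts (P : Multiset ℕ) (X Y : Finset ℕ) : Multiset ℕ := P - X.val + Y.val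

lemma mem_or_mem_of_mem_replaceParts (hx : x ∈ replaceParts P X Y) : x ∈ P ∨ x ∈ Y :=
  (Multiset.mem_add.1 hx).imp (Multiset.mem_of_le tsub_le_self) id

lemma notMem_replaceParts (hP : x ∉ P) (hY : x ∉ Y) : x ∉ replaceParts P X Y := fun hx =>
  (mem_or_mem_of_mem_replaceParts hx).elim hP hY

lemma mem_replaceParts_of_mem (hx : x ∈ Y) : x ∈ replaceParts P X Y :=
  Multiset.mem_add.2 (Or.inr hx)

lemma val_le_of_forall_mem (h : ∀ x ∈ X, x ∈ P) : X.val ≤ P :=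
  (Multiset.le_iff_subset X.nodup).2 h

lemma replaceParts_replaceParts (h : X.val ≤ P) :
    replaceParts (replaceParts P X Y) Y X = P := by
  rw [replaceParts, replaceParts, add_tsub_cancel_right, tsub_add_cancel_of_le h]

lemma sum_replaceParts_add (h : X.val ≤ P) :
    (replaceParts P X Y).sum + ∑ x ∈ X, x = P.sum + ∑ y ∈ Y, y := by
  have hX : ∑ x ∈ X, x = X.val.sum := (Finset.sum_val X).symm
  have hY : ∑ y ∈ Y, y = Y.val.sum := (Finset.sum_val Y).symm
  rw [hX, hY, replaceParts, Multiset.sum_add, add_right_comm, ← Multiset.sum_add,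
    tsub_add_cancel_of_le h]

end Replace

section Windows

variable (k : ℕ)

/- A window `w = (a, s)` is `a+1, …, a+k+s`. In lower position it holds the run `a+1, …, a+k`
followed by the parts `highBlock k w`; in upper position the parts `lowBlock w` followed by the
run `a+s+1, …, a+s+k`. -/
def window (w : ℕ × ℕ) : Finset ℕ := Ioc w.1 (w.1 + k + w.2)

def lowBlock (w : ℕ × ℕ) : Finset ℕ := Ioc w.1 (w.1 + w.2)

def highBlock (w : ℕ × ℕ) : Finset ℕ := Ioc (w.1 + k) (w.1 + k + w.2)

def Gapped (D : Finset (ℕ × ℕ)) : Prop :=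
  (D : Set (ℕ × ℕ)).Pairwise fun w w' => w.1 + k + w.2 < w'.1 ∨ w'.1 + k + w'.2 < w.1

def IsFrame (P : Multiset ℕ) (D : Finset (ℕ × ℕ)) : Prop :=
  Gapped k D ∧ ∀ w ∈ D, w.1 ∉ P ∧ w.1 + k + w.2 + 1 ∉ P

def IsLowerMarking (P : Multiset ℕ) (D : Finset (ℕ × ℕ)) : Prop :=
  IsFrame k P D ∧ ∀ x ∈ D.biUnion (highBlock k), x ∈ P

def IsUpperMarking (P : Multiset ℕ) (D : Finset (ℕ × ℕ)) : Prop :=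
  IsFrame k P D ∧ ∀ x ∈ D.biUnion lowBlock, x ∈ P

variable {k} {D : Finset (ℕ × ℕ)} {P : Multiset ℕ} {w w' : ℕ × ℕ} {x : ℕ}

lemma lowBlock_subset_window (w : ℕ × ℕ) : lowBlock w ⊆ window k w :=
  Ioc_subset_Ioc le_rfl (by omega)

lemma highBlock_subset_window (w : ℕ × ℕ) : highBlock k w ⊆ window k w :=
  Ioc_subset_Ioc (by omega) le_rfl

lemma Gapped.eq_of_mem_window (hD : Gapped k D) (hw : w ∈ D) (hw' : w' ∈ D)
    (hx : x ∈ window k w') (h₁ : w.1 ≤ x) (h₂ : x ≤ w.1 + k + w.2 + 1) : w' = w := by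
  by_contra hne
  have := mem_Ioc.1 hx
  rcases hD hw hw' (Ne.symm hne) with h | h <;> omega

lemma Gapped.pairwiseDisjoint_window (hD : Gapped k D) :
    (D : Set (ℕ × ℕ)).PairwiseDisjoint (window k) := fun w hw w' hw' hne =>
  disjoint_left.2 fun x hx hx' => hne <|
    hD.eq_of_mem_window hw' hw hx (mem_Ioc.1 hx').1.le (by have := mem_Ioc.1 hx'; omega)

lemma Gapped.runsApart_image_fst (hD : Gapped k D) : RunsApart k (D.image Prod.fst) := by
  simp only [RunsApart, mem_image]
  rintro _ ⟨w, hw, rfl⟩ _ ⟨w', hw', rfl⟩ hlt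
  rcases hD hw hw' (by rintro rfl; omega) with h | h <;> omega

lemma Gapped.runsApart_image_add (hD : Gapped k D) :
    RunsApart k (D.image fun w => w.1 + w.2) := by
  simp only [RunsApart, mem_image]
  rintro _ ⟨w, hw, rfl⟩ _ ⟨w', hw', rfl⟩ hlt
  rcases hD hw hw' (by rintro rfl; omega) with h | h <;> omega

lemma gapped_image {S : Finset ℕ} {f : ℕ → ℕ × ℕ}
    (h : ∀ j ∈ S, ∀ j' ∈ S, j < j' → (f j).1 + k + (f j).2 < (f j').1) :
    Gapped k (S.image f) := by
  simp only [Gapped, coe_image]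
  rintro _ ⟨j, hj, rfl⟩ _ ⟨j', hj', rfl⟩ hne
  rcases lt_or_gt_of_ne (ne_of_apply_ne f hne) with hlt | hlt
  · exact Or.inl (h j hj j' hj' hlt)
  · exact Or.inr (h j' hj' j hj hlt)

lemma Gapped.notMem_biUnion (hD : Gapped k D) {Y : ℕ × ℕ → Finset ℕ}
    (hY : ∀ w, Y w ⊆ window k w) (hw : w ∈ D) (hx : x = w.1 ∨ x = w.1 + k + w.2 + 1) :
    x ∉ D.biUnion Y := by
  intro hmem
  obtain ⟨w', hw', hx'⟩ := mem_biUnion.1 hmem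
  have hx' := hY w' hx'
  obtain rfl := hD.eq_of_mem_window hw hw' hx' (by omega) (by omega)
  have := mem_Ioc.1 hx'
  omega

lemma IsFrame.replaceParts (hP : IsFrame k P D) {Y : ℕ × ℕ → Finset ℕ}
    (hY : ∀ w, Y w ⊆ window k w) (X : Finset ℕ) :
    IsFrame k (replaceParts P X (D.biUnion Y)) D :=
  ⟨hP.1, fun w hw => ⟨notMem_replaceParts (hP.2 w hw).1 (hP.1.notMem_biUnion hY hw (.inl rfl)),
    notMem_replaceParts (hP.2 w hw).2 (hP.1.notMem_biUnion hY hw (.inr rfl))⟩⟩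

lemma sum_Ioc_add_add (b d l : ℕ) :
    ∑ x ∈ Ioc (b + d) (b + d + l), x = ∑ x ∈ Ioc b (b + l), x + l * d := by
  rw [add_right_comm b d l, ← map_add_right_Ioc, sum_map]
  simp only [addRightEmbedding_apply, sum_add_distrib, sum_const, Nat.card_Ioc, smul_eq_mul,
    Nat.add_sub_cancel_left]

lemma Gapped.sum_biUnion_shift (hD : Gapped k D) {b d l : ℕ × ℕ → ℕ}
    (h₀ : ∀ w, Ioc (b w) (b w + l w) ⊆ window k w)
    (h₁ : ∀ w, Ioc (b w + d w) (b w + d w + l w) ⊆ window k w) :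
    ∑ x ∈ D.biUnion (fun w => Ioc (b w + d w) (b w + d w + l w)), x
      = ∑ x ∈ D.biUnion (fun w => Ioc (b w) (b w + l w)), x + ∑ w ∈ D, l w * d w := by
  rw [sum_biUnion (hD.pairwiseDisjoint_window.mono_on fun w _ => h₁ w),
    sum_biUnion (hD.pairwiseDisjoint_window.mono_on fun w _ => h₀ w), ← sum_add_distrib]
  exact sum_congr rfl fun w _ => sum_Ioc_add_add _ _ _

lemma Gapped.sum_highBlock (hD : Gapped k D) :
    ∑ x ∈ D.biUnion (highBlock k), x = ∑ x ∈ D.biUnion lowBlock, x + ∑ w ∈ D, w.2 * k :=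
  hD.sum_biUnion_shift (b := Prod.fst) (d := fun _ => k) (l := Prod.snd)
    lowBlock_subset_window highBlock_subset_window

lemma Gapped.sum_runs_image_add (hD : Gapped k D) :
    ∑ x ∈ runs k (D.image fun w => w.1 + w.2), x
      = ∑ x ∈ runs k (D.image Prod.fst), x + ∑ w ∈ D, k * w.2 := by
  simp only [runs, image_biUnion]
  exact hD.sum_biUnion_shift (fun w => Ioc_subset_Ioc le_rfl (by omega))
    (fun w => Ioc_subset_Ioc (by omega) (by omega))

end Windows

lemma _root_.Overpartition.ext {μ ν : Overpartition} (hp : μ.parts = ν.parts)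
    (ho : μ.overParts = ν.overParts) : μ = ν := by
  cases μ; cases ν; congr

section Slides

variable {k : ℕ} {D : Finset (ℕ × ℕ)} {μ : Overpartition}

lemma pos_of_mem_biUnion_Ioc {s : Finset (ℕ × ℕ)} {a b : ℕ × ℕ → ℕ} {x : ℕ}
    (hx : x ∈ s.biUnion fun w => Ioc (a w) (b w)) : 0 < x := by
  obtain ⟨w, -, hx⟩ := mem_biUnion.1 hx
  exact Nat.zero_lt_of_lt (mem_Ioc.1 hx).1

lemma pos_of_mem_runs {S : Finset ℕ} {x : ℕ} (hx : x ∈ runs k S) : 0 < x := by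
  obtain ⟨j, -, hx⟩ := mem_runs.1 hx
  exact Nat.zero_lt_of_lt (mem_Ioc.1 hx).1

variable (k) in
def slideDown (D : Finset (ℕ × ℕ)) (μ : Overpartition) : Overpartition where
  parts := replaceParts μ.parts (D.biUnion (highBlock k)) (D.biUnion lowBlock)
  overParts := runs k (D.image fun w => w.1 + w.2)
  parts_pos p hp := (mem_or_mem_of_mem_replaceParts hp).elim (μ.parts_pos p)
    pos_of_mem_biUnion_Ioc
  over_pos _ := pos_of_mem_runs

variable (k) in
def slideUp (D : Finset (ℕ × ℕ)) (μ : Overpartition) : Overpartition where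
  parts := replaceParts μ.parts (D.biUnion lowBlock) (D.biUnion (highBlock k))
  overParts := runs k (D.image Prod.fst)
  parts_pos p hp := (mem_or_mem_of_mem_replaceParts hp).elim (μ.parts_pos p)
    pos_of_mem_biUnion_Ioc
  over_pos _ := pos_of_mem_runs

lemma slideUp_slideDown (hO : μ.overParts = runs k (D.image Prod.fst))
    (hA : ∀ x ∈ D.biUnion (highBlock k), x ∈ μ.parts) :
    slideUp k D (slideDown k D μ) = μ :=
  Overpartition.ext (replaceParts_replaceParts (val_le_of_forall_mem hA)) hO.symm

lemma slideDown_slideUp (hO : μ.overParts = runs k (D.image fun w => w.1 + w.2))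
    (hB : ∀ x ∈ D.biUnion lowBlock, x ∈ μ.parts) : slideDown k D (slideUp k D μ) = μ :=
  Overpartition.ext (replaceParts_replaceParts (val_le_of_forall_mem hB)) hO.symm

lemma Gapped.size_slideDown (hD : Gapped k D) (hO : μ.overParts = runs k (D.image Prod.fst))
    (hA : ∀ x ∈ D.biUnion (highBlock k), x ∈ μ.parts) :
    (slideDown k D μ).size = μ.size := by
  have hparts := sum_replaceParts_add (Y := D.biUnion lowBlock) (val_le_of_forall_mem hA)
  have hcomm : ∑ w ∈ D, w.2 * k = ∑ w ∈ D, k * w.2 := sum_congr rfl fun _ _ => mul_comm _ _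
  have := hD.sum_highBlock
  have := hD.sum_runs_image_add
  simp only [Overpartition.size, slideDown, hO]
  omega

lemma Gapped.size_slideUp (hD : Gapped k D)
    (hO : μ.overParts = runs k (D.image fun w => w.1 + w.2))
    (hB : ∀ x ∈ D.biUnion lowBlock, x ∈ μ.parts) : (slideUp k D μ).size = μ.size := by
  have hparts := sum_replaceParts_add (Y := D.biUnion (highBlock k)) (val_le_of_forall_mem hB)
  have hcomm : ∑ w ∈ D, w.2 * k = ∑ w ∈ D, k * w.2 := sum_congr rfl fun _ _ => mul_comm _ _
  have := hD.sum_highBlock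
  have := hD.sum_runs_image_add
  simp only [Overpartition.size, slideUp, hO]
  omega

end Slides

section Markings

variable {k : ℕ} {D : Finset (ℕ × ℕ)} {μ ν : Overpartition}

lemma IsFrame.isLowerMarking_slideUp (hD : IsFrame k μ.parts D) :
    IsLowerMarking k (slideUp k D μ).parts D :=
  ⟨hD.replaceParts highBlock_subset_window _, fun _ => mem_replaceParts_of_mem⟩

lemma IsFrame.isUpperMarking_slideDown (hD : IsFrame k μ.parts D) :
    IsUpperMarking k (slideDown k D μ).parts D :=
  ⟨hD.replaceParts lowBlock_subset_window _, fun _ => mem_replaceParts_of_mem⟩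

lemma IsFrame.isLowerKRun (hD : IsFrame k ν.parts D)
    (hO : ν.overParts = runs k (D.image Prod.fst)) : IsLowerKRun k ν := by
  rw [isLowerKRun_iff, hO]
  refine hD.1.runsApart_image_fst.coveredByRuns ?_
  simp only [forall_mem_image]
  exact fun w hw => (hD.2 w hw).1

lemma IsFrame.isUpperKRun (hD : IsFrame k ν.parts D)
    (hO : ν.overParts = runs k (D.image fun w => w.1 + w.2)) : IsUpperKRun k ν := by
  rw [isUpperKRun_iff, hO]
  refine hD.1.runsApart_image_add.coveredByRuns ?_
  simp only [forall_mem_image]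
  exact fun w hw => by rw [add_right_comm w.1]; exact (hD.2 w hw).2

variable (k) in
def lowerMarking (μ : Overpartition) : Finset (ℕ × ℕ) :=
  (runStarts μ.overParts).image fun j => (j, blockAbove μ.parts (j + k))

def upperMarking (μ : Overpartition) : Finset (ℕ × ℕ) :=
  (runStarts μ.overParts).image fun j => (gapBelow μ.parts j, j - gapBelow μ.parts j)

lemma _root_.IsLowerKRun.isLowerMarking (h : IsLowerKRun k μ) :
    IsLowerMarking k μ.parts (lowerMarking k μ) := by
  have hc := isLowerKRun_iff.1 h
  refine ⟨⟨gapped_image fun j hj j' hj' hlt => ?_, ?_⟩, ?_⟩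
  · exact add_blockAbove_lt (hc.runsApart j hj j' hj' hlt) (hc.runStarts_spec hj').2
  · simp only [lowerMarking, forall_mem_image]
    exact fun j hj => ⟨(hc.runStarts_spec hj).2, add_blockAbove_add_one_notMem _ _⟩
  · simp only [lowerMarking, image_biUnion, mem_biUnion]
    rintro x ⟨j, -, hx⟩
    exact mem_of_mem_Ioc_blockAbove hx

lemma _root_.IsLowerKRun.overParts_eq_runs (h : IsLowerKRun k μ) :
    μ.overParts = runs k ((lowerMarking k μ).image Prod.fst) := by
  simpa only [lowerMarking, image_image, Function.comp_def, image_id']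
    using (isLowerKRun_iff.1 h).eq_runs

lemma _root_.IsUpperKRun.isUpperMarking (h : IsUpperKRun k μ) :
    IsUpperMarking k μ.parts (upperMarking μ) := by
  have hc := isUpperKRun_iff.1 h
  have hg := gapBelow_le μ.parts
  refine ⟨⟨gapped_image fun j hj j' hj' hlt => ?_, ?_⟩, ?_⟩
  · have := hc.runsApart j hj j' hj' hlt
    have := le_gapBelow (b := j') (by omega) (hc.runStarts_spec hj).2
    have := hg j
    omega
  · simp only [upperMarking, forall_mem_image]
    refine fun j hj => ⟨gapBelow_notMem (fun h0 => (μ.parts_pos 0 h0).false) j, ?_⟩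
    rw [show gapBelow μ.parts j + k + (j - gapBelow μ.parts j) + 1 = j + k + 1 by
      have := hg j; omega]
    exact (hc.runStarts_spec hj).2
  · simp only [upperMarking, image_biUnion, mem_biUnion]
    rintro x ⟨j, -, hx⟩
    rw [lowBlock, Nat.add_sub_cancel' (hg j)] at hx
    exact mem_of_mem_Ioc_gapBelow hx

lemma _root_.IsUpperKRun.overParts_eq_runs (h : IsUpperKRun k μ) :
    μ.overParts = runs k ((upperMarking μ).image fun w => w.1 + w.2) := by
  simpa only [upperMarking, image_image, Function.comp_def,
    Nat.add_sub_cancel' (gapBelow_le _ _), image_id'] using (isUpperKRun_iff.1 h).eq_runs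

lemma IsLowerMarking.lowerMarking_eq (hk : 0 < k) (hD : IsLowerMarking k ν.parts D)
    (hO : ν.overParts = runs k (D.image Prod.fst)) : lowerMarking k ν = D := by
  rw [lowerMarking, hO, runStarts_runs hk hD.1.1.runsApart_image_fst, image_image]
  conv_rhs => rw [← image_id (s := D)]
  refine image_congr fun w hw => ?_
  simp only [Function.comp_apply, id]
  rw [blockAbove_eq (fun x hx => hD.2 x (mem_biUnion.2 ⟨w, hw, hx⟩)) (hD.1.2 w hw).2]

lemma IsUpperMarking.upperMarking_eq (hk : 0 < k) (hD : IsUpperMarking k ν.parts D)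
    (hO : ν.overParts = runs k (D.image fun w => w.1 + w.2)) : upperMarking ν = D := by
  rw [upperMarking, hO, runStarts_runs hk hD.1.1.runsApart_image_add, image_image]
  conv_rhs => rw [← image_id (s := D)]
  refine image_congr fun w hw => ?_
  simp only [Function.comp_apply, id]
  rw [gapBelow_eq (Nat.le_add_right _ _) (hD.1.2 w hw).1
    (fun x hx => hD.2 x (mem_biUnion.2 ⟨w, hw, hx⟩)), Nat.add_sub_cancel_left]

end Markings

section Bijection

variable {k : ℕ} {μ : Overpartition}

variable (k) in
def toUpper (μ : Overpartition) : Overpartition := slideDown k (lowerMarking k μ) μ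

variable (k) in
def toLower (μ : Overpartition) : Overpartition := slideUp k (upperMarking μ) μ

lemma _root_.IsLowerKRun.size_toUpper (h : IsLowerKRun k μ) : (toUpper k μ).size = μ.size :=
  h.isLowerMarking.1.1.size_slideDown h.overParts_eq_runs h.isLowerMarking.2

lemma _root_.IsLowerKRun.isUpperKRun_toUpper (h : IsLowerKRun k μ) :
    IsUpperKRun k (toUpper k μ) :=
  h.isLowerMarking.1.isUpperMarking_slideDown.1.isUpperKRun rfl

lemma _root_.IsLowerKRun.toLower_toUpper (hk : 0 < k) (h : IsLowerKRun k μ) :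
    toLower k (toUpper k μ) = μ := by
  unfold toLower toUpper
  rw [h.isLowerMarking.1.isUpperMarking_slideDown.upperMarking_eq hk rfl]
  exact slideUp_slideDown h.overParts_eq_runs h.isLowerMarking.2

lemma _root_.IsUpperKRun.size_toLower (h : IsUpperKRun k μ) : (toLower k μ).size = μ.size :=
  h.isUpperMarking.1.1.size_slideUp h.overParts_eq_runs h.isUpperMarking.2

lemma _root_.IsUpperKRun.isLowerKRun_toLower (h : IsUpperKRun k μ) :
    IsLowerKRun k (toLower k μ) :=
  h.isUpperMarking.1.isLowerMarking_slideUp.1.isLowerKRun rfl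

lemma _root_.IsUpperKRun.toUpper_toLower (hk : 0 < k) (h : IsUpperKRun k μ) :
    toUpper k (toLower k μ) = μ := by
  unfold toLower toUpper
  rw [h.isUpperMarking.1.isLowerMarking_slideUp.lowerMarking_eq hk rfl]
  exact slideDown_slideUp h.overParts_eq_runs h.isUpperMarking.2

end Bijection

end KRun

open KRun in
/-- The number of lower k-run overpartitions of n equals the number of upper k-run
overpartitions of n, for all n ≥ 0 and k ≥ 1. -/
theorem lower_eq_upper (n k : ℕ) (hk : 1 ≤ k) :
    lowerKRunCount k n = upperKRunCount k n :=
  Nat.card_congr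
    { toFun := fun μ =>
        ⟨toUpper k μ, μ.2.2.size_toUpper.trans μ.2.1, μ.2.2.isUpperKRun_toUpper⟩
      invFun := fun μ =>
        ⟨toLower k μ, μ.2.2.size_toLower.trans μ.2.1, μ.2.2.isLowerKRun_toLower⟩
      left_inv := fun μ => Subtype.ext (μ.2.2.toLower_toUpper hk)
      right_inv := fun μ => Subtype.ext (μ.2.2.toUpper_toLower hk) }
end

section
/- The function f(u) = −2π²u²/(k(k+1)) + Li₂(e^{2πiu})/(k(k+1)) has a critical point at u = w := (i log 2)/(2π), where f(w) = π²/(12k(k+1)) and f''(w) = −8π²/(k(k+1)). -/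
open Real

/-- The classical dilogarithm Li₂(z) = Σ_{n≥1} zⁿ/n² on the unit disk. -/
noncomputable def dilogC (z : ℂ) : ℂ := ∑' n : ℕ, z ^ (n + 1) / ((n : ℂ) + 1) ^ 2

/-!
Termwise differentiation gives `z Li₂'(z) = -log (1 - z)` on the unit disk, so on the upper half
plane `f'(u) = (-4π²u - 2πi log (1 - e^{2πiu})) / (k(k+1))`. At `w` we have `e^{2πiw} = 1/2`,
hence `log (1 - e^{2πiw}) = 2πiw`, which gives `f'(w) = 0` and `f''(w) = (-4π² + (2πi)²)/(k(k+1))`.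
The value `f(w)` reduces to `Li₂(1/2) = π²/12 - (log 2)²/2`, the case `x = 1/2` of Euler's
reflection formula `Li₂(x) + Li₂(1 - x) + log x log (1 - x) = π²/6`. The left side of the
reflection formula has zero derivative on `(0, 1)` and tends to `Li₂(1) = ζ(2)` as `x → 1⁻`.
-/

open Filter Topology Set

lemma summable_one_div_add_one_sq : Summable fun n : ℕ => 1 / ((n : ℝ) + 1) ^ 2 := by
  simpa using (summable_nat_add_iff 1).mpr (Real.summable_one_div_nat_pow.mpr one_lt_two)

lemma norm_dilogC_term_le {z : ℂ} (hz : ‖z‖ ≤ 1) (n : ℕ) :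
    ‖z ^ (n + 1) / ((n : ℂ) + 1) ^ 2‖ ≤ 1 / ((n : ℝ) + 1) ^ 2 := by
  rw [norm_div, norm_pow, norm_pow, ← Nat.cast_add_one, Complex.norm_natCast, Nat.cast_add_one]
  gcongr
  exact pow_le_one₀ (norm_nonneg z) hz

lemma continuousOn_dilogC : ContinuousOn dilogC (Metric.closedBall 0 1) :=
  continuousOn_tsum (fun n => by fun_prop) summable_one_div_add_one_sq
    fun n _ hz => norm_dilogC_term_le (mem_closedBall_zero_iff.mp hz) n

lemma continuousOn_dilogC_ofReal : ContinuousOn (fun t : ℝ => dilogC t) (Icc (-1) 1) :=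
  continuousOn_dilogC.comp Complex.continuous_ofReal.continuousOn fun t ht => by
    simpa [abs_le] using ht

lemma dilogC_zero : dilogC 0 = 0 := by
  simp [dilogC]

lemma dilogC_one : dilogC 1 = π ^ 2 / 6 := by
  have h : HasSum (fun n : ℕ => 1 / ((n : ℝ) + 1) ^ 2) (π ^ 2 / 6) := by
    simpa using (hasSum_nat_add_iff' 1).mpr hasSum_zeta_two
  convert (Complex.hasSum_ofReal.mpr h).tsum_eq using 1
  · simp [dilogC]
  · push_cast; rfl

lemma hasSum_pow_div_add_one {z : ℂ} (hz : ‖z‖ < 1) (hz0 : z ≠ 0) :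
    HasSum (fun n : ℕ => z ^ n / ((n : ℂ) + 1)) (-Complex.log (1 - z) / z) := by
  refine ((Complex.hasSum_taylorSeries_neg_log' hz).div_const z).congr_fun fun n => ?_
  field_simp
  ring

lemma hasDerivAt_dilogC {z : ℂ} (hz : ‖z‖ < 1) (hz0 : z ≠ 0) :
    HasDerivAt dilogC (-Complex.log (1 - z) / z) z := by
  obtain ⟨r, hzr, hr1⟩ := exists_between hz
  have hr0 : 0 < r := (norm_nonneg z).trans_lt hzr
  have hterm (n : ℕ) (y : ℂ) :
      HasDerivAt (fun y => y ^ (n + 1) / ((n : ℂ) + 1) ^ 2) (y ^ n / ((n : ℂ) + 1)) y := by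
    refine ((hasDerivAt_pow (n + 1) y).div_const (((n : ℂ) + 1) ^ 2)).congr_deriv ?_
    push_cast
    field_simp
  have hbound (n : ℕ) (y : ℂ) (hy : y ∈ Metric.ball (0 : ℂ) r) :
      ‖y ^ n / ((n : ℂ) + 1)‖ ≤ r ^ n := by
    rw [norm_div, norm_pow, ← Nat.cast_add_one, Complex.norm_natCast, Nat.cast_add_one]
    rw [mem_ball_zero_iff] at hy
    calc ‖y‖ ^ n / ((n : ℝ) + 1) ≤ ‖y‖ ^ n := div_le_self (by positivity) (by simp)
      _ ≤ r ^ n := by gcongr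
  have h := hasDerivAt_tsum_of_isPreconnected (summable_geometric_of_lt_one hr0.le hr1)
    Metric.isOpen_ball (convex_ball (0 : ℂ) r).isPreconnected (fun n y _ => hterm n y) hbound
    (Metric.mem_ball_self hr0) (by simp) (mem_ball_zero_iff.mpr hzr)
  rwa [(hasSum_pow_div_add_one hz hz0).tsum_eq] at h

lemma hasDerivAt_dilogC_ofReal {x : ℝ} (hx : |x| < 1) (hx0 : x ≠ 0) :
    HasDerivAt (fun t : ℝ => dilogC t) (-(Real.log (1 - x) : ℂ) / x) x := by
  have h1x : 0 ≤ 1 - x := by linarith [le_abs_self x]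
  have h := (hasDerivAt_dilogC (by rwa [Complex.norm_real])
    (Complex.ofReal_ne_zero.mpr hx0)).comp_ofReal
  rwa [← Complex.ofReal_one, ← Complex.ofReal_sub, ← Complex.ofReal_log h1x] at h

lemma hasDerivAt_dilogC_reflection {x : ℝ} (hx : x ∈ Ioo (0 : ℝ) 1) :
    HasDerivAt
      (fun t : ℝ => dilogC t + dilogC (1 - t : ℝ) + (Real.log t * Real.log (1 - t) : ℝ)) 0 x := by
  obtain ⟨hx0, hx1⟩ := hx
  have h1x : 0 < 1 - x := by linarith
  have hsub : HasDerivAt (fun t : ℝ => 1 - t) (-1) x := (hasDerivAt_id x).const_sub 1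
  have hdilog := hasDerivAt_dilogC_ofReal (abs_lt.mpr ⟨by linarith, hx1⟩) hx0.ne'
  have hdilog_sub := (hasDerivAt_dilogC_ofReal (x := 1 - x)
    (abs_lt.mpr ⟨by linarith, by linarith⟩) h1x.ne').scomp x hsub
  have hlog := ((Real.hasDerivAt_log hx0.ne').mul
    ((Real.hasDerivAt_log h1x.ne').comp x hsub)).ofReal_comp
  refine ((hdilog.add hdilog_sub).add hlog).congr_deriv ?_
  have hx0' : (x : ℂ) ≠ 0 := by exact_mod_cast hx0.ne'
  have h1x' : (1 - x : ℂ) ≠ 0 := by exact_mod_cast h1x.ne'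
  simp only [Function.comp_apply, sub_sub_cancel, neg_smul, one_smul]
  push_cast
  field_simp
  ring

lemma tendsto_log_mul_log_one_sub_nhdsLT_one :
    Tendsto (fun x : ℝ => Real.log x * Real.log (1 - x)) (𝓝[<] 1) (𝓝 0) := by
  have hslope : Tendsto (slope Real.log 1) (𝓝[<] 1) (𝓝 1⁻¹) :=
    (Real.hasDerivAt_log one_ne_zero).tendsto_slope.mono_left (nhdsLT_le_nhdsNE 1)
  have hmul_log : Tendsto (fun x : ℝ => (1 - x) * Real.log (1 - x)) (𝓝[<] 1) (𝓝 0) := by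
    have h : Continuous fun x : ℝ => (1 - x) * Real.log (1 - x) :=
      Real.continuous_mul_log.comp (by fun_prop)
    simpa using (h.tendsto 1).mono_left nhdsWithin_le_nhds
  have h := (hslope.mul hmul_log).neg
  rw [mul_zero, neg_zero] at h
  refine h.congr' ?_
  filter_upwards [self_mem_nhdsWithin] with x (hx : x < 1)
  rw [slope_def_field, Real.log_one, sub_zero]
  field_simp [sub_ne_zero.mpr hx.ne]
  ring

lemma dilogC_reflection {x : ℝ} (hx : x ∈ Ioo (0 : ℝ) 1) :
    dilogC x + dilogC (1 - x : ℝ) + (Real.log x * Real.log (1 - x) : ℝ) = π ^ 2 / 6 := by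
  set ψ : ℝ → ℂ := fun t => dilogC t + dilogC (1 - t : ℝ) + (Real.log t * Real.log (1 - t) : ℝ)
  have hconst : ∀ y ∈ Ioo (0 : ℝ) 1, ψ y = ψ x := fun y hy =>
    isOpen_Ioo.is_const_of_deriv_eq_zero isPreconnected_Ioo
      (fun t ht => (hasDerivAt_dilogC_reflection ht).differentiableAt.differentiableWithinAt)
      (fun t ht => (hasDerivAt_dilogC_reflection ht).deriv) hy hx
  have hdilog : Tendsto (fun t : ℝ => dilogC t) (𝓝[<] 1) (𝓝 (π ^ 2 / 6)) := by
    have h := (continuousOn_dilogC_ofReal 1 (by norm_num)).mono_of_mem_nhdsWithin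
      (Icc_mem_nhdsLT (by norm_num))
    simpa [dilogC_one] using h.tendsto
  have hdilog_sub : Tendsto (fun t : ℝ => dilogC (1 - t : ℝ)) (𝓝[<] 1) (𝓝 0) := by
    have h := (continuousOn_dilogC_ofReal.comp (continuous_sub_left (1 : ℝ)).continuousOn
      fun t (ht : t ∈ Icc (0 : ℝ) 2) => ⟨by linarith [ht.2], by linarith [ht.1]⟩) 1 (by norm_num)
    simpa [Function.comp_def, dilogC_zero] using
      (h.mono_of_mem_nhdsWithin (Icc_mem_nhdsLT_of_mem (by norm_num))).tendsto
  have hψ : Tendsto ψ (𝓝[<] 1) (𝓝 (π ^ 2 / 6)) := by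
    simpa [ψ] using (hdilog.add hdilog_sub).add
      (Complex.continuous_ofReal.tendsto 0 |>.comp tendsto_log_mul_log_one_sub_nhdsLT_one)
  refine tendsto_nhds_unique (tendsto_const_nhds.congr' ?_) hψ
  filter_upwards [Ioo_mem_nhdsLT zero_lt_one] with y hy using (hconst y hy).symm

lemma dilogC_one_half : dilogC (1 / 2) = π ^ 2 / 12 - (Real.log 2 : ℂ) ^ 2 / 2 := by
  have h := dilogC_reflection (x := 1 / 2) (by norm_num)
  rw [show (1 : ℝ) - 1 / 2 = 1 / 2 by norm_num, one_div, Real.log_inv] at h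
  push_cast at h
  rw [one_div]
  linear_combination h / 2

lemma hasDerivAt_dilogC_comp_exp {c u : ℂ} (hu : ‖Complex.exp (c * u)‖ < 1) :
    HasDerivAt (fun v => dilogC (Complex.exp (c * v)))
      (-c * Complex.log (1 - Complex.exp (c * u))) u := by
  have hexp : HasDerivAt (fun v => Complex.exp (c * v)) (Complex.exp (c * u) * c) u := by
    simpa using ((hasDerivAt_id u).const_mul c).cexp
  refine ((hasDerivAt_dilogC hu (Complex.exp_ne_zero _)).comp u hexp).congr_deriv ?_
  field_simp [Complex.exp_ne_zero]

lemma hasDerivAt_log_one_sub_exp {c u : ℂ} (hu : 1 - Complex.exp (c * u) ∈ Complex.slitPlane) :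
    HasDerivAt (fun v => Complex.log (1 - Complex.exp (c * v)))
      (-c * Complex.exp (c * u) / (1 - Complex.exp (c * u))) u := by
  have hexp : HasDerivAt (fun v => Complex.exp (c * v)) (Complex.exp (c * u) * c) u := by
    simpa using ((hasDerivAt_id u).const_mul c).cexp
  refine ((hexp.const_sub 1).clog hu).congr_deriv ?_
  ring

noncomputable def dilogPotential (K u : ℂ) : ℂ :=
  -2 * (π : ℂ) ^ 2 * u ^ 2 / K + dilogC (Complex.exp (2 * (π : ℂ) * Complex.I * u)) / K

noncomputable def dilogPotentialDeriv (K u : ℂ) : ℂ :=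
  (-4 * (π : ℂ) ^ 2 * u -
    2 * π * Complex.I * Complex.log (1 - Complex.exp (2 * π * Complex.I * u))) / K

lemma hasDerivAt_dilogPotential (K : ℂ) {u : ℂ} (hu : 0 < u.im) :
    HasDerivAt (dilogPotential K) (dilogPotentialDeriv K u) u := by
  have hquad := ((hasDerivAt_pow 2 u).const_mul (-2 * (π : ℂ) ^ 2)).div_const K
  have hdilog := (hasDerivAt_dilogC_comp_exp
    (UpperHalfPlane.norm_exp_two_pi_I_lt_one ⟨u, hu⟩)).div_const K
  refine (hquad.add hdilog).congr_deriv ?_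
  simp only [dilogPotentialDeriv]
  ring

lemma deriv_dilogPotential_eventuallyEq (K : ℂ) {u : ℂ} (hu : 0 < u.im) :
    deriv (dilogPotential K) =ᶠ[𝓝 u] dilogPotentialDeriv K := by
  filter_upwards [(isOpen_lt continuous_const Complex.continuous_im).mem_nhds hu] with v hv
  exact (hasDerivAt_dilogPotential K hv).deriv

lemma hasDerivAt_dilogPotentialDeriv (K : ℂ) {u : ℂ}
    (hu : 1 - Complex.exp (2 * π * Complex.I * u) ∈ Complex.slitPlane) :
    HasDerivAt (dilogPotentialDeriv K)
      ((-4 * π ^ 2 + (2 * π * Complex.I) ^ 2 * Complex.exp (2 * π * Complex.I * u) /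
        (1 - Complex.exp (2 * π * Complex.I * u))) / K) u := by
  have hlin := (hasDerivAt_id u).const_mul (-4 * (π : ℂ) ^ 2)
  have hlog := (hasDerivAt_log_one_sub_exp hu).const_mul (2 * π * Complex.I)
  refine ((hlin.sub hlog).div_const K).congr_deriv ?_
  ring

lemma exp_two_pi_I_mul_eq_one_half {u : ℂ} (hu : 2 * π * Complex.I * u = -(Real.log 2 : ℂ)) :
    Complex.exp (2 * π * Complex.I * u) = 1 / 2 := by
  rw [hu, ← Complex.ofReal_neg, ← Complex.ofReal_exp, Real.exp_neg, Real.exp_log two_pos]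
  norm_num

lemma dilogPotentialDeriv_eq_zero (K : ℂ) {u : ℂ}
    (hu : 2 * π * Complex.I * u = -(Real.log 2 : ℂ)) : dilogPotentialDeriv K u = 0 := by
  have hlog : Complex.log (1 - Complex.exp (2 * π * Complex.I * u)) = 2 * π * Complex.I * u := by
    rw [exp_two_pi_I_mul_eq_one_half hu, show (1 : ℂ) - 1 / 2 = ((2⁻¹ : ℝ) : ℂ) by norm_num,
      ← Complex.ofReal_log (by norm_num), Real.log_inv, Complex.ofReal_neg, hu]
  rw [dilogPotentialDeriv, hlog, div_eq_zero_iff]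
  left
  linear_combination (-4 * π ^ 2 * u) * Complex.I_sq

lemma dilogPotential_eq (K : ℂ) {u : ℂ} (hu : 2 * π * Complex.I * u = -(Real.log 2 : ℂ)) :
    dilogPotential K u = π ^ 2 / 12 / K := by
  rw [dilogPotential, exp_two_pi_I_mul_eq_one_half hu, dilogC_one_half, ← add_div]
  congr 1
  linear_combination (1 / 2 * (2 * π * Complex.I * u - Real.log 2)) * hu -
    2 * π ^ 2 * u ^ 2 * Complex.I_sq

lemma hasDerivAt_dilogPotentialDeriv_of_exp_eq_one_half (K : ℂ) {u : ℂ}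
    (hu : Complex.exp (2 * π * Complex.I * u) = 1 / 2) :
    HasDerivAt (dilogPotentialDeriv K) (-8 * π ^ 2 / K) u := by
  have hslit : 1 - Complex.exp (2 * π * Complex.I * u) ∈ Complex.slitPlane := by
    rw [hu]; norm_num [Complex.slitPlane]
  convert hasDerivAt_dilogPotentialDeriv K hslit using 1
  rw [hu]
  congr 1
  linear_combination -4 * π ^ 2 * Complex.I_sq

theorem critical_point_f_general (k : ℕ) (f : ℂ → ℂ)
    (hf : f = fun u => -2 * (π : ℂ) ^ 2 * u ^ 2 / ((k : ℂ) * ((k : ℂ) + 1)) +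
      dilogC (Complex.exp (2 * (π : ℂ) * Complex.I * u)) / ((k : ℂ) * ((k : ℂ) + 1)))
    (w : ℂ) (hw : w = Complex.I * (Real.log 2 : ℂ) / (2 * (π : ℂ))) :
    deriv f w = 0 ∧ f w = (π : ℂ) ^ 2 / (12 * (k : ℂ) * ((k : ℂ) + 1)) ∧
      deriv (deriv f) w = -8 * (π : ℂ) ^ 2 / ((k : ℂ) * ((k : ℂ) + 1)) := by
  have hf' : f = dilogPotential (k * (k + 1)) := hf
  have hw_im : 0 < w.im := by
    rw [hw, show 2 * (π : ℂ) = ((2 * π : ℝ) : ℂ) by push_cast; rfl, Complex.div_ofReal_im]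
    simp only [Complex.mul_im, Complex.I_re, Complex.I_im, Complex.ofReal_re, Complex.ofReal_im]
    have := Real.log_pos one_lt_two
    positivity
  have hc : 2 * π * Complex.I * w = -(Real.log 2 : ℂ) := by
    have : (π : ℂ) ≠ 0 := Complex.ofReal_ne_zero.mpr pi_ne_zero
    rw [hw]
    field_simp
    linear_combination (Real.log 2 : ℂ) * Complex.I_sq
  have hderiv := deriv_dilogPotential_eventuallyEq (k * (k + 1)) hw_im
  rw [← hf'] at hderiv
  refine ⟨?_, ?_, ?_⟩
  · rw [hderiv.eq_of_nhds, dilogPotentialDeriv_eq_zero _ hc]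
  · rw [hf', dilogPotential_eq _ hc, div_div, mul_assoc]
  · rw [hderiv.deriv_eq,
      (hasDerivAt_dilogPotentialDeriv_of_exp_eq_one_half _ (exp_two_pi_I_mul_eq_one_half hc)).deriv]

/-- The function f(u) = −2π²u²/(k(k+1)) + Li₂(e^{2πiu})/(k(k+1)) has a critical point at
w = i log 2/(2π), with f(w) = π²/(12k(k+1)) and f''(w) = −8π²/(k(k+1)). -/
theorem critical_point_f (k : ℕ) (hk : 1 ≤ k) (f : ℂ → ℂ)
    (hf : f = fun u => -2 * (π : ℂ) ^ 2 * u ^ 2 / ((k : ℂ) * ((k : ℂ) + 1)) +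
      dilogC (Complex.exp (2 * (π : ℂ) * Complex.I * u)) / ((k : ℂ) * ((k : ℂ) + 1)))
    (w : ℂ) (hw : w = Complex.I * (Real.log 2 : ℂ) / (2 * (π : ℂ))) :
    deriv f w = 0 ∧ f w = (π : ℂ) ^ 2 / (12 * (k : ℂ) * ((k : ℂ) + 1)) ∧
      deriv (deriv f) w = -8 * (π : ℂ) ^ 2 / ((k : ℂ) * ((k : ℂ) + 1)) :=
  critical_point_f_general k f hf w hw
end

section
/- For B ≥ 0 fixed and |x| < 1, as ε → 0⁺: Li₂(e^{−Bε}x; e^{−ε}) = (1/ε)·Li₂(x) + (B − 1/2)·log(1−x) + O(ε), uniformly in x on compact subsets of the open unit disk, where Li₂(x;q) := Σ_{m≥1} x^m/(m(1−q^m)) is the quantum dilogarithm and Li₂(x) = Σ_{n≥1} x^n/n². -/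
/-!
The `m`-th term of `Li₂(e^{-Bε}x; e^{-ε})` is `(xᵐ/m) · e^{-Bt}/(1 - e^{-t})` with `t = mε`, and
`e^{-Bt}/(1 - e^{-t}) = 1/t - (B - 1/2) + O(t)` uniformly in `t > 0` once `B ≥ 0` (the error is at
most `4(B + 1)² t`: Taylor expansion for small `t`, boundedness for large `t`). Summed over `m`, the
two main terms give `Li₂(x)/ε` and `(B - 1/2) log(1 - x)`, and the error is at most
`4(B + 1)² ε Σ |x|ᵐ`, which is `O(ε)` uniformly for `|x| ≤ r < 1`.
-/

open Real

/-- The quantum dilogarithm Li₂(x;q) = Σ_{m≥1} xᵐ/(m(1−qᵐ)). -/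
noncomputable def qdilog (x q : ℂ) : ℂ :=
  ∑' m : ℕ, x ^ (m + 1) / (((m : ℂ) + 1) * (1 - q ^ (m + 1)))

theorem abs_exp_sub_quadratic_le {x : ℝ} (hx : |x| ≤ 1) :
    |exp x - (1 + x + x ^ 2 / 2)| ≤ 2 / 9 * |x| ^ 3 := by
  have h := Real.exp_bound hx (n := 3) (by norm_num)
  norm_num [Finset.sum_range_succ, Nat.factorial] at h
  exact h.trans_eq (mul_comm _ _)

theorem div_one_add_le_one_sub_exp_neg {t : ℝ} (ht : 0 ≤ t) : t / (1 + t) ≤ 1 - exp (-t) := by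
  have hprod : exp (-t) * (1 + t) ≤ 1 := by
    calc exp (-t) * (1 + t) ≤ exp (-t) * exp t := by gcongr; linarith [add_one_le_exp t]
      _ = 1 := by rw [← exp_add, neg_add_cancel, exp_zero]
  rw [div_le_iff₀ (by linarith)]
  nlinarith

/-- `e^{-Bt}/(1 - e^{-t}) = Σ Bₙ(1 - B) tⁿ⁻¹/n!` (Bernoulli polynomials); this is what is left
after its first two terms `1/t + (1/2 - B)`. -/
noncomputable def bernoulliRemainder (B t : ℝ) : ℝ :=
  exp (-(B * t)) / (1 - exp (-t)) - 1 / t + (B - 1 / 2)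

theorem abs_bernoulliRemainder_le_of_mul_le_one {B t : ℝ} (hB : 0 ≤ B) (ht : 0 < t)
    (hBt : (B + 1) * t ≤ 1) : |bernoulliRemainder B t| ≤ 4 * (B + 1) ^ 2 * t := by
  have ht1 : t ≤ 1 := by nlinarith
  set R₁ := exp (-(B * t)) - 1 + B * t
  set R₂ := exp (-t) - (1 - t + t ^ 2 / 2)
  have hR₁ : |R₁| ≤ B ^ 2 * t ^ 2 := by
    have h := abs_exp_sub_one_sub_id_le (x := -(B * t))
      (by rw [abs_neg, abs_of_nonneg (by positivity)]; nlinarith)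
    convert h using 2 <;> ring
  have hR₂ : |R₂| ≤ 2 / 9 * t ^ 3 := by
    have h := abs_exp_sub_quadratic_le (x := -t) (by rwa [abs_neg, abs_of_pos ht])
    rw [abs_neg, abs_of_pos ht] at h
    convert h using 3; ring
  have hden : t ^ 2 / 2 ≤ t * (1 - exp (-t)) := by
    have := div_one_add_le_one_sub_exp_neg ht.le
    calc t ^ 2 / 2 ≤ t * (t / (1 + t)) := by
          rw [mul_div_assoc', div_le_div_iff₀ two_pos (by linarith)]; nlinarith
      _ ≤ t * (1 - exp (-t)) := by gcongr
  have hnum : bernoulliRemainder B t * (t * (1 - exp (-t))) =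
      t * R₁ + R₂ - (B - 1 / 2) * (t ^ 3 / 2) - (B - 1 / 2) * t * R₂ := by
    have : 1 - exp (-t) ≠ 0 := sub_ne_zero.2 (exp_lt_one_iff.2 (by linarith)).ne'
    unfold bernoulliRemainder R₁ R₂
    field_simp
    ring
  have hB' : |B - 1 / 2| ≤ B + 1 := abs_le.2 ⟨by linarith, by linarith⟩
  have hnum_le : |bernoulliRemainder B t| * (t ^ 2 / 2) ≤ 2 * (B + 1) ^ 2 * t ^ 3 := by
    calc |bernoulliRemainder B t| * (t ^ 2 / 2)
        ≤ |bernoulliRemainder B t * (t * (1 - exp (-t)))| := by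
          rw [abs_mul]; gcongr; exact hden.trans (le_abs_self _)
      _ ≤ |t * R₁| + |R₂| + |(B - 1 / 2) * (t ^ 3 / 2)| + |(B - 1 / 2) * t * R₂| := by
          rw [hnum]
          exact (abs_sub _ _).trans (add_le_add_left ((abs_sub _ _).trans
            (add_le_add_left (abs_add_le _ _) _)) _)
      _ = t * |R₁| + |R₂| + |B - 1 / 2| * (t ^ 3 / 2) + |B - 1 / 2| * t * |R₂| := by
          simp only [abs_mul, abs_of_pos ht, abs_of_pos (by positivity : (0 : ℝ) < t ^ 3 / 2)]
      _ ≤ t * (B ^ 2 * t ^ 2) + 2 / 9 * t ^ 3 + (B + 1) * (t ^ 3 / 2)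
            + (B + 1) * t * (2 / 9 * t ^ 3) := by gcongr
      _ ≤ 2 * (B + 1) ^ 2 * t ^ 3 := by nlinarith [pow_pos ht 3]
  exact le_of_mul_le_mul_right (hnum_le.trans_eq (by ring)) (by positivity)

theorem abs_bernoulliRemainder_le_of_one_le_mul {B t : ℝ} (hB : 0 ≤ B) (ht : 0 < t)
    (hBt : 1 ≤ (B + 1) * t) : |bernoulliRemainder B t| ≤ 4 * (B + 1) ^ 2 * t := by
  have hinv : 1 / t ≤ B + 1 := by rw [div_le_iff₀ ht]; linarith
  have hden : 0 < 1 - exp (-t) := sub_pos.2 (exp_lt_one_iff.2 (by linarith))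
  have hquot : exp (-(B * t)) / (1 - exp (-t)) ≤ B + 2 := by
    calc exp (-(B * t)) / (1 - exp (-t)) ≤ 1 / (t / (1 + t)) :=
          div_le_div₀ zero_le_one (exp_le_one_iff.2 (by nlinarith)) (by positivity)
            (div_one_add_le_one_sub_exp_neg ht.le)
      _ = 1 / t + 1 := by field_simp
      _ ≤ B + 2 := by linarith
  have hB' : |B - 1 / 2| ≤ B + 1 / 2 := abs_le.2 ⟨by linarith, by linarith⟩
  calc |bernoulliRemainder B t|
      ≤ |exp (-(B * t)) / (1 - exp (-t))| + |1 / t| + |B - 1 / 2| :=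
        (abs_add_le _ _).trans (add_le_add_left (abs_sub _ _) _)
    _ ≤ (B + 2) + (B + 1) + (B + 1 / 2) := by
        rw [abs_of_pos (by positivity), abs_of_pos (by positivity)]; gcongr
    _ ≤ 4 * (B + 1) * ((B + 1) * t) := by nlinarith
    _ = 4 * (B + 1) ^ 2 * t := by ring

theorem abs_bernoulliRemainder_le {B t : ℝ} (hB : 0 ≤ B) (ht : 0 < t) :
    |bernoulliRemainder B t| ≤ 4 * (B + 1) ^ 2 * t := by
  rcases le_total ((B + 1) * t) 1 with h | h
  · exact abs_bernoulliRemainder_le_of_mul_le_one hB ht h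
  · exact abs_bernoulliRemainder_le_of_one_le_mul hB ht h

theorem cexp_neg_mul_pow_succ (a ε : ℝ) (n : ℕ) :
    Complex.exp (-((a : ℂ) * ε)) ^ (n + 1) = (exp (-(a * (ε * (n + 1)))) : ℂ) := by
  rw [← Complex.exp_nat_mul]
  push_cast
  ring_nf

theorem qdilog_term_eq (B ε : ℝ) (x : ℂ) (n : ℕ) :
    (Complex.exp (-((B : ℂ) * (ε : ℂ))) * x) ^ (n + 1) /
        (((n : ℂ) + 1) * (1 - Complex.exp (-(ε : ℂ)) ^ (n + 1))) =
      x ^ (n + 1) * ((bernoulliRemainder B (ε * (n + 1)) / (n + 1) : ℝ) : ℂ)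
        + 1 / ε * (x ^ (n + 1) / (n + 1) ^ 2) - (B - 1 / 2) * (x ^ (n + 1) / (n + 1)) := by
  have h := cexp_neg_mul_pow_succ 1 ε n
  simp only [Complex.ofReal_one, one_mul] at h
  rw [mul_pow, cexp_neg_mul_pow_succ, h, bernoulliRemainder]
  generalize exp (-(B * (ε * (n + 1)))) = A
  generalize exp (-(ε * (n + 1))) = E
  push_cast
  simp only [div_eq_mul_inv, mul_inv, ← inv_pow]
  ring

theorem norm_bernoulliRemainder_div_le {B ε : ℝ} (hB : 0 ≤ B) (hε : 0 < ε) (n : ℕ) :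
    ‖((bernoulliRemainder B (ε * (n + 1)) / (n + 1) : ℝ) : ℂ)‖ ≤ 4 * (B + 1) ^ 2 * ε := by
  have hn : (0 : ℝ) < n + 1 := n.cast_add_one_pos
  rw [Complex.norm_real, norm_eq_abs, abs_div, abs_of_pos hn, div_le_iff₀ hn]
  calc |bernoulliRemainder B (ε * (n + 1))| ≤ 4 * (B + 1) ^ 2 * (ε * (n + 1)) :=
        abs_bernoulliRemainder_le hB (by positivity)
    _ = 4 * (B + 1) ^ 2 * ε * (n + 1) := by ring

section PowerSeriesBounds

variable {𝕜 : Type*} [NormedField 𝕜] {x : 𝕜} {c : ℕ → 𝕜} {M : ℝ}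

theorem norm_pow_succ_mul_le (hx : ‖x‖ ≤ 1) (hc : ∀ n, ‖c n‖ ≤ M) (n : ℕ) :
    ‖x ^ (n + 1) * c n‖ ≤ M * ‖x‖ ^ n := by
  have hM : 0 ≤ M := (norm_nonneg _).trans (hc 0)
  rw [norm_mul, norm_pow, pow_succ, mul_comm M]
  gcongr
  · exact mul_le_of_le_one_right (by positivity) hx
  · exact hc n

theorem summable_pow_succ_mul [CompleteSpace 𝕜] (hx : ‖x‖ < 1) (hc : ∀ n, ‖c n‖ ≤ M) :
    Summable fun n ↦ x ^ (n + 1) * c n :=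
  .of_norm_bounded ((summable_geometric_of_lt_one (norm_nonneg x) hx).mul_left M)
    (norm_pow_succ_mul_le hx.le hc)

theorem norm_tsum_pow_succ_mul_le (hx : ‖x‖ < 1) (hc : ∀ n, ‖c n‖ ≤ M) :
    ‖∑' n, x ^ (n + 1) * c n‖ ≤ M / (1 - ‖x‖) := by
  rw [div_eq_mul_inv]
  exact tsum_of_norm_bounded ((hasSum_geometric_of_lt_one (norm_nonneg x) hx).mul_left M)
    (norm_pow_succ_mul_le hx.le hc)

end PowerSeriesBounds

theorem hasSum_dilogC {x : ℂ} (hx : ‖x‖ < 1) :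
    HasSum (fun n : ℕ ↦ x ^ (n + 1) / ((n : ℂ) + 1) ^ 2) (dilogC x) := by
  have hc (n : ℕ) : ‖(((n : ℂ) + 1) ^ 2)⁻¹‖ ≤ 1 := by
    rw [norm_inv]
    apply inv_le_one_of_one_le₀
    rw [norm_pow, ← Nat.cast_add_one, Complex.norm_natCast]
    exact one_le_pow₀ (by simp)
  simp only [div_eq_mul_inv]
  exact (summable_pow_succ_mul hx hc).hasSum

theorem hasSum_qdilog_sub {B ε : ℝ} (hB : 0 ≤ B) (hε : 0 < ε) {x : ℂ} (hx : ‖x‖ < 1) :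
    HasSum (fun n : ℕ ↦ x ^ (n + 1) * ((bernoulliRemainder B (ε * (n + 1)) / (n + 1) : ℝ) : ℂ))
      (qdilog (Complex.exp (-((B : ℂ) * (ε : ℂ))) * x) (Complex.exp (-(ε : ℂ))) -
        ((1 / (ε : ℂ)) * dilogC x + ((B : ℂ) - 1 / 2) * Complex.log (1 - x))) := by
  have hrem := (summable_pow_succ_mul hx (norm_bernoulliRemainder_div_le hB hε)).hasSum
  have hsum := (hrem.add ((hasSum_dilogC hx).mul_left (1 / (ε : ℂ)))).sub
    ((Complex.hasSum_taylorSeries_neg_log' hx).mul_left ((B : ℂ) - 1 / 2))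
  simp only [← qdilog_term_eq] at hsum
  rw [qdilog, hsum.tsum_eq, mul_neg, sub_neg_eq_add, add_assoc, add_sub_cancel_right]
  exact hrem

/-- As ε → 0⁺, Li₂(e^{−Bε}x; e^{−ε}) = (1/ε) Li₂(x) + (B − 1/2) log(1−x) + O(ε), uniformly
in x on compact subsets of the open unit disk. -/
theorem qdilog_asymptotic (B : ℝ) (hB : 0 ≤ B) (K : Set ℂ) (hK : IsCompact K)
    (hKd : K ⊆ Metric.ball 0 1) :
    ∃ C ε₀ : ℝ, 0 < C ∧ 0 < ε₀ ∧ ∀ ε : ℝ, 0 < ε → ε < ε₀ → ∀ x ∈ K,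
      ‖qdilog (Complex.exp (-((B : ℂ) * (ε : ℂ))) * x) (Complex.exp (-(ε : ℂ))) -
          ((1 / (ε : ℂ)) * dilogC x + ((B : ℂ) - 1 / 2) * Complex.log (1 - x))‖ ≤ C * ε := by
  obtain ⟨r, hr, hKr⟩ := exists_lt_subset_ball hK.isClosed hKd
  have hB1 : 0 < B + 1 := by linarith
  refine ⟨4 * (B + 1) ^ 2 / (1 - r), 1, div_pos (by positivity) (by linarith), one_pos,
    fun ε hε _ x hxK ↦ ?_⟩
  have hxr : ‖x‖ < r := by simpa using hKr hxK
  rw [← (hasSum_qdilog_sub hB hε (hxr.trans hr)).tsum_eq]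
  calc _ ≤ 4 * (B + 1) ^ 2 * ε / (1 - ‖x‖) :=
        norm_tsum_pow_succ_mul_le (hxr.trans hr) (norm_bernoulliRemainder_div_le hB hε)
    _ ≤ 4 * (B + 1) ^ 2 * ε / (1 - r) := by gcongr
    _ = 4 * (B + 1) ^ 2 / (1 - r) * ε := by ring
end
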